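/- If u is a function of bounded mean oscillation on 5B in a metric measure space with doubling measure μ, then for every λ > 0 the measure of the set of points x in B with |u(x) − u_B| > λ is at most 2μ(B)·exp(−Aλ/‖u‖_BMO), where A depends only on the doubling constant of μ. -/

import Mathlib

/-!
Induction on `k`: for every ball `B'` with `4B' ⊆ 5B`, the set where `|u - u_{B'}| > k K M`,
`K = 5 D⁶`, has measure at most `2⁻ᵏ μ(B')`. For the inductive step, around almost every point
of the level set (a Lebesgue point) stop at the first dyadic radius where the mean of
`|u - u_{B'}|` over the ball exceeds `4 D⁵ M`. The mean of `u` over the fivefold enlarged ball is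
then within `K M` of `u_{B'}`, so the level `(k + 1) K M` for `B'` lies above the level `k K M`
for the enlarged ball. A Vitali subfamily of the stopping balls covers the level set up to a null
set, and since these balls are disjoint and carry large means of `|u - u_{B'}|`, their total
measure is at most `μ(B') / (2 D³)`. Taking `k = ⌊λ / (K M)⌋` gives the exponential bound with
`A = log 2 / K`.
-/

open MeasureTheory Metric

noncomputable def oscBall {X : Type*} [MetricSpace X] [MeasurableSpace X]
    (μ : Measure X) (u : X → ℝ) (x : X) (r : ℝ) : ℝ :=
  ⨍ y in ball x r, |u y - ⨍ z in ball x r, u z ∂μ| ∂μ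

open Set Filter Topology
open scoped ENNReal

section Average

variable {α : Type*} [MeasurableSpace α] {μ : Measure α} {s t : Set α} {f g : α → ℝ}

theorem abs_setAverage_sub_le (hs₀ : μ s ≠ 0) (hs : μ s ≠ ⊤) (hf : IntegrableOn f s μ) (c : ℝ) :
    |(⨍ x in s, f x ∂μ) - c| ≤ ⨍ x in s, |f x - c| ∂μ := by
  simpa [Real.dist_eq] using (convexOn_univ_dist c).map_set_average_le
    (continuous_id.dist continuous_const).continuousOn isClosed_univ hs₀ hs
    (by simp) hf ((hf.sub (integrableOn_const hs)).abs)

theorem setAverage_le_mul_setAverage_of_subset (hst : s ⊆ t) (hs₀ : μ s ≠ 0) (ht : μ t ≠ ⊤)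
    {C : ℝ} (hC : μ.real t ≤ C * μ.real s) (hg : 0 ≤ g) (hgt : IntegrableOn g t μ) :
    ⨍ x in s, g x ∂μ ≤ C * ⨍ x in t, g x ∂μ := by
  have hs_pos : 0 < μ.real s :=
    ENNReal.toReal_pos hs₀ (ne_top_of_le_ne_top ht (measure_mono hst))
  have ht_pos : 0 < μ.real t := hs_pos.trans_le (measureReal_mono hst ht)
  have hint : ∫ x in s, g x ∂μ ≤ ∫ x in t, g x ∂μ :=
    setIntegral_mono_set hgt (Eventually.of_forall hg) hst.eventuallyLE
  rw [setAverage_eq, setAverage_eq, smul_eq_mul, smul_eq_mul, ← mul_assoc]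
  calc (μ.real s)⁻¹ * ∫ x in s, g x ∂μ ≤ (μ.real s)⁻¹ * ∫ x in t, g x ∂μ := by gcongr
    _ ≤ C * (μ.real t)⁻¹ * ∫ x in t, g x ∂μ := by
      gcongr
      · exact integral_nonneg hg
      · rw [← div_eq_mul_inv, inv_le_iff_one_le_mul₀ hs_pos, div_mul_eq_mul_div, le_div_iff₀ ht_pos]
        linarith

theorem abs_setAverage_sub_setAverage_le (hst : s ⊆ t) (hs₀ : μ s ≠ 0) (ht : μ t ≠ ⊤)
    {C : ℝ} (hC : μ.real t ≤ C * μ.real s) (hf : IntegrableOn f t μ) :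
    |(⨍ x in s, f x ∂μ) - ⨍ x in t, f x ∂μ| ≤ C * ⨍ x in t, |f x - ⨍ y in t, f y ∂μ| ∂μ :=
  (abs_setAverage_sub_le hs₀ (ne_top_of_le_ne_top ht (measure_mono hst)) (hf.mono_set hst) _).trans
    (setAverage_le_mul_setAverage_of_subset hst hs₀ ht hC (fun _ => abs_nonneg _)
      (hf.sub (integrableOn_const ht)).abs)

theorem ofReal_mul_measure_le_setLIntegral (hs₀ : μ s ≠ 0) (hs : μ s ≠ ⊤)
    (hf : IntegrableOn f s μ) (hf₀ : 0 ≤ f) {a : ℝ} (ha : a ≤ ⨍ x in s, f x ∂μ) :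
    ENNReal.ofReal a * μ s ≤ ∫⁻ x in s, ENNReal.ofReal (f x) ∂μ := by
  have := ENNReal.ofReal_le_ofReal ha
  rwa [ofReal_setAverage hf (Eventually.of_forall hf₀),
    ENNReal.le_div_iff_mul_le (Or.inl hs₀) (Or.inl hs)] at this

theorem mul_measure_biUnion_le_setLIntegral {ι : Type*} {u : Set ι} (hu : u.Countable)
    {B : ι → Set α} (hB : ∀ i ∈ u, MeasurableSet (B i)) (hdisj : u.PairwiseDisjoint B)
    {g : α → ℝ≥0∞} {a : ℝ≥0∞} (h : ∀ i ∈ u, a * μ (B i) ≤ ∫⁻ x in B i, g x ∂μ) :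
    a * μ (⋃ i ∈ u, B i) ≤ ∫⁻ x in ⋃ i ∈ u, B i, g x ∂μ := by
  rw [measure_biUnion hu hdisj hB, lintegral_biUnion hu hB hdisj, ← ENNReal.tsum_mul_left]
  exact ENNReal.tsum_le_tsum fun i => h i i.2

theorem setIntegral_abs_sub_le (hs : μ s ≠ ⊤) (hf : IntegrableOn f s μ) (c c' : ℝ) :
    ∫ x in s, |f x - c| ∂μ ≤ μ.real s * ((⨍ x in s, |f x - c'| ∂μ) + |c' - c|) := by
  have hf' : IntegrableOn (fun x => |f x - c'|) s μ := (hf.sub (integrableOn_const hs)).abs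
  calc ∫ x in s, |f x - c| ∂μ ≤ ∫ x in s, (|f x - c'| + |c' - c|) ∂μ :=
        setIntegral_mono ((hf.sub (integrableOn_const hs)).abs) (hf'.add (integrableOn_const hs))
          fun x => abs_sub_le _ _ _
    _ = _ := by
      rw [integral_add hf' (integrableOn_const hs), setIntegral_const,
        ← measure_smul_setAverage _ hs, smul_eq_mul, smul_eq_mul, mul_add]

end Average

theorem exists_countable_disjoint_ball_cover {X : Type*} [MetricSpace X]
    [TopologicalSpace.SeparableSpace X]
    (t : Set X) (r : X → ℝ) {R : ℝ} (hr : ∀ y ∈ t, 0 < r y) (hR : ∀ y ∈ t, r y ≤ R) :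
    ∃ u ⊆ t, u.Countable ∧ u.PairwiseDisjoint (fun y => ball y (r y)) ∧
      t ⊆ ⋃ y ∈ u, ball y (5 * r y) := by
  obtain ⟨u, hut, hdisj, hcov⟩ :=
    Vitali.exists_disjoint_subfamily_covering_enlargement_closedBall t id r R hR 4 (by norm_num)
  have hdisj' : u.PairwiseDisjoint (fun y => ball y (r y)) :=
    hdisj.mono fun y => ball_subset_closedBall
  refine ⟨u, hut, hdisj'.countable_of_isOpen (fun _ _ => isOpen_ball)
    (fun y hy => ⟨y, mem_ball_self (hr y (hut hy))⟩), hdisj', fun y hy => ?_⟩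
  obtain ⟨b, hbu, hb⟩ := hcov y hy
  exact mem_biUnion hbu (closedBall_subset_ball (by linarith [hr b (hut hbu)])
    (hb (mem_closedBall_self (hr y hy).le)))

section Doubling

variable {X : Type*} [MetricSpace X] [MeasurableSpace X] {μ : Measure X} {D : ℝ}

theorem isLocallyFiniteMeasure_of_measure_ball_ne_top
    (h : ∀ (x : X) (r : ℝ), 0 < r → μ (ball x r) ≠ ⊤) : IsLocallyFiniteMeasure μ :=
  ⟨fun x => ⟨ball x 1, ball_mem_nhds x one_pos, (h x 1 one_pos).lt_top⟩⟩

theorem sigmaFinite_of_measure_ball_ne_top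
    (h : ∀ (x : X) (r : ℝ), 0 < r → μ (ball x r) ≠ ⊤) : SigmaFinite μ := by
  rcases isEmpty_or_nonempty X with hX | ⟨⟨x⟩⟩
  · exact Measure.sigmaFinite_of_countable (S := ∅) countable_empty (by simp)
      (by simp [eq_iff_true_of_subsingleton])
  refine Measure.sigmaFinite_of_countable (S := range fun n : ℕ => ball x (n + 1))
    (countable_range _) (forall_mem_range.2 fun n => (h x _ (by positivity)).lt_top) ?_
  refine sUnion_range _ ▸ iUnion_eq_univ_iff.2 fun y => ?_
  obtain ⟨n, hn⟩ := exists_nat_gt (dist y x)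
  exact ⟨n, mem_ball.2 (by linarith)⟩

/-- A maximal `ε`-separated set is `ε`-dense, and it is countable because the balls of radius
`ε / 2` around its points are disjoint and have positive measure. -/
theorem secondCountableTopology_of_measure_ball_ne_zero [OpensMeasurableSpace X] [SFinite μ]
    (h : ∀ (x : X) (r : ℝ), 0 < r → μ (ball x r) ≠ 0) : SecondCountableTopology X := by
  refine Metric.secondCountable_of_almost_dense_set fun ε hε => ?_
  obtain ⟨N, hN⟩ : ∃ N : Set X, Maximal (fun N => N ⊆ univ ∧ IsSeparated (ε.toNNReal) N) N := by
    simpa using zorn_subset {N : Set X | IsSeparated (ε.toNNReal) N} fun c hc hchain =>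
      ⟨⋃₀ c, hchain.pairwise_sUnion.2 hc, fun _ => subset_sUnion_of_mem⟩
  refine ⟨N, ?_, fun x => ?_⟩
  · have hdisj : Pairwise (Function.onFun Disjoint fun p : N => ball (p : X) (ε / 2)) :=
      fun p q hpq => ball_disjoint_ball <| by
        have : ENNReal.ofReal ε < edist (p : X) q := hN.prop.2 p.2 q.2 (Subtype.coe_ne_coe.2 hpq)
        rw [edist_dist, ENNReal.ofReal_lt_ofReal_iff_of_nonneg hε.le] at this
        linarith
    have := Measure.countable_meas_pos_of_disjoint_iUnion (μ := μ)
      (fun _ => measurableSet_ball) hdisj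
    simp only [fun p : N => pos_iff_ne_zero.2 (h p (ε / 2) (half_pos hε)), ofPred_true,
      countable_univ_iff] at this
    exact countable_coe_iff.1 this
  · obtain ⟨y, hy, hxy⟩ := IsCover.of_maximal_isSeparated hN (mem_univ x)
    exact ⟨y, hy, by simpa [edist_dist, ← ENNReal.ofReal_coe_nnreal, hε.le] using hxy⟩

structure IsDoublingWith (μ : Measure X) (D : ℝ) : Prop where
  one_le : 1 ≤ D
  measure_ball_two_mul_le :
    ∀ (x : X) (r : ℝ), 0 < r → μ (ball x (2 * r)) ≤ ENNReal.ofReal D * μ (ball x r)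
  measure_ball_ne_zero : ∀ (x : X) (r : ℝ), 0 < r → μ (ball x r) ≠ 0
  measure_ball_ne_top : ∀ (x : X) (r : ℝ), 0 < r → μ (ball x r) ≠ ⊤

namespace IsDoublingWith

theorem measure_ball_le_pow_mul (hμ : IsDoublingWith μ D) (x : X) {r R : ℝ} (hr : 0 < r)
    (n : ℕ) (hR : R ≤ 2 ^ n * r) : μ (ball x R) ≤ ENNReal.ofReal (D ^ n) * μ (ball x r) := by
  induction n generalizing R with
  | zero => simpa using measure_mono (ball_subset_ball (by simpa using hR))
  | succ n ih =>
    calc μ (ball x R) ≤ μ (ball x (2 * (2 ^ n * r))) :=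
          measure_mono (ball_subset_ball (by rw [pow_succ] at hR; linarith))
      _ ≤ ENNReal.ofReal D * μ (ball x (2 ^ n * r)) :=
          hμ.measure_ball_two_mul_le _ _ (by positivity)
      _ ≤ ENNReal.ofReal D * (ENNReal.ofReal (D ^ n) * μ (ball x r)) := by gcongr; exact ih le_rfl
      _ = ENNReal.ofReal (D ^ (n + 1)) * μ (ball x r) := by
        rw [← mul_assoc, ← ENNReal.ofReal_mul (by linarith [hμ.one_le]), pow_succ, mul_comm D]

theorem measureReal_ball_le_pow_mul (hμ : IsDoublingWith μ D) (x : X) {r R : ℝ} (hr : 0 < r)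
    (n : ℕ) (hR : R ≤ 2 ^ n * r) : μ.real (ball x R) ≤ D ^ n * μ.real (ball x r) := by
  have hD : 0 ≤ D ^ n := pow_nonneg (by linarith [hμ.one_le]) n
  simpa [measureReal_def, ENNReal.toReal_mul, ENNReal.toReal_ofReal hD] using
    ENNReal.toReal_mono (ENNReal.mul_ne_top ENNReal.ofReal_ne_top (hμ.measure_ball_ne_top x r hr))
      (hμ.measure_ball_le_pow_mul x hr n hR)

theorem measureReal_ball_pos (hμ : IsDoublingWith μ D) (x : X) {r : ℝ} (hr : 0 < r) :
    0 < μ.real (ball x r) :=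
  ENNReal.toReal_pos (hμ.measure_ball_ne_zero x r hr) (hμ.measure_ball_ne_top x r hr)

theorem isUnifLocDoublingMeasure (hμ : IsDoublingWith μ D) : IsUnifLocDoublingMeasure μ := by
  refine ⟨⟨(D ^ 2).toNNReal, eventually_nhdsWithin_of_forall fun ε (hε : 0 < ε) x => ?_⟩⟩
  calc μ (closedBall x (2 * ε)) ≤ μ (ball x (4 * ε)) :=
        measure_mono (closedBall_subset_ball (by linarith))
    _ ≤ ENNReal.ofReal (D ^ 2) * μ (ball x ε) := hμ.measure_ball_le_pow_mul x hε 2 (by linarith)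
    _ ≤ _ := mul_le_mul_right (measure_mono ball_subset_closedBall) _

theorem secondCountableTopology [OpensMeasurableSpace X]
    (hμ : IsDoublingWith μ D) : SecondCountableTopology X :=
  have := sigmaFinite_of_measure_ball_ne_top hμ.measure_ball_ne_top
  secondCountableTopology_of_measure_ball_ne_zero hμ.measure_ball_ne_zero

theorem ae_tendsto_setAverage_abs_sub [BorelSpace X] (hμ : IsDoublingWith μ D) {w : X → ℝ}
    (hw : LocallyIntegrable w μ) :
    ∀ᵐ y ∂μ, Tendsto (fun r => ⨍ z in closedBall y r, |w z - w y| ∂μ) (𝓝[>] 0) (𝓝 0) := by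
  have := hμ.secondCountableTopology
  have := isLocallyFiniteMeasure_of_measure_ball_ne_top hμ.measure_ball_ne_top
  have := hμ.isUnifLocDoublingMeasure
  filter_upwards [IsUnifLocDoublingMeasure.ae_tendsto_average_norm_sub μ hw 1] with y hy
  simpa using hy (fun _ => y) id tendsto_id (eventually_nhdsWithin_of_forall
    fun r (hr : 0 < r) => mem_closedBall_self (by simpa using hr.le))

theorem measure_closedBall_ne_zero (hμ : IsDoublingWith μ D) (x : X) {r : ℝ} (hr : 0 < r) :
    μ (closedBall x r) ≠ 0 :=
  measure_mono_null ball_subset_closedBall |>.mt (hμ.measure_ball_ne_zero x r hr)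

theorem measure_closedBall_ne_top (hμ : IsDoublingWith μ D) (x : X) {r : ℝ} (hr : 0 < r) :
    μ (closedBall x r) ≠ ⊤ :=
  ne_top_of_le_ne_top (hμ.measure_ball_ne_top x (2 * r) (by linarith))
    (measure_mono (closedBall_subset_ball (by linarith)))

theorem eventually_lt_setAverage_closedBall (hμ : IsDoublingWith μ D) {w : X → ℝ}
    (hw : Integrable w μ) {y : X}
    (hy : Tendsto (fun r => ⨍ z in closedBall y r, |w z - w y| ∂μ) (𝓝[>] 0) (𝓝 0))
    {c t : ℝ} (hlt : t < |w y - c|) :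
    ∀ᶠ r in 𝓝[>] 0, t < ⨍ z in closedBall y r, |w z - c| ∂μ := by
  filter_upwards [hy.eventually_lt_const (sub_pos.2 hlt), self_mem_nhdsWithin]
    with r hr (hr₀ : 0 < r)
  have h₀ := hμ.measure_closedBall_ne_zero y hr₀
  have hfin := hμ.measure_closedBall_ne_top y hr₀
  have h₁ := abs_setAverage_sub_le h₀ hfin hw.integrableOn (w y)
  have h₂ := abs_setAverage_sub_le h₀ hfin hw.integrableOn c
  have h₃ := abs_sub_abs_le_abs_sub (w y - c) ((⨍ z in closedBall y r, w z ∂μ) - c)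
  rw [abs_sub_comm (w y - c), sub_sub_sub_cancel_right] at h₃
  linarith

theorem eventually_lt_setAverage_ball (hμ : IsDoublingWith μ D) {w : X → ℝ} (hw : Integrable w μ)
    {y : X} (hy : Tendsto (fun r => ⨍ z in closedBall y r, |w z - w y| ∂μ) (𝓝[>] 0) (𝓝 0))
    {c t : ℝ} (hlt : D * t < |w y - c|) :
    ∀ᶠ r in 𝓝[>] 0, t < ⨍ z in ball y r, |w z - c| ∂μ := by
  have hD : 0 < D := by linarith [hμ.one_le]
  have hhalf : Tendsto (fun r : ℝ => r / 2) (𝓝[>] 0) (𝓝[>] 0) :=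
    tendsto_nhdsWithin_of_tendsto_nhds_of_eventually_within _
      (((continuous_id.div_const 2).tendsto' 0 0 (by simp)).mono_left nhdsWithin_le_nhds)
      (eventually_nhdsWithin_of_forall fun r (hr : 0 < r) => half_pos hr)
  filter_upwards [hhalf.eventually (hμ.eventually_lt_setAverage_closedBall hw hy hlt),
    self_mem_nhdsWithin] with r hr (hr₀ : 0 < r)
  have hsub : closedBall y (r / 2) ⊆ ball y r := closedBall_subset_ball (half_lt_self hr₀)
  have hC : μ.real (ball y r) ≤ D * μ.real (closedBall y (r / 2)) :=
    calc μ.real (ball y r) ≤ D ^ 1 * μ.real (ball y (r / 2)) :=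
          hμ.measureReal_ball_le_pow_mul y (half_pos hr₀) 1 (by linarith)
      _ ≤ D * μ.real (closedBall y (r / 2)) := by
          rw [pow_one]
          gcongr
          · exact hμ.measure_closedBall_ne_top y (half_pos hr₀)
          · exact ball_subset_closedBall
  have := setAverage_le_mul_setAverage_of_subset hsub
    (hμ.measure_closedBall_ne_zero y (half_pos hr₀)) (hμ.measure_ball_ne_top y r hr₀) hC
    (fun _ => abs_nonneg _)
    (hw.integrableOn.sub (integrableOn_const (C := c) (hμ.measure_ball_ne_top y r hr₀))).abs
  exact lt_of_mul_lt_mul_left (hr.trans_le this) hD.le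

end IsDoublingWith

end Doubling

theorem exists_dyadic_radius_of_eventually {P : ℝ → Prop} {R : ℝ} (hR : 0 < R)
    (hP : ∀ᶠ r in 𝓝[>] 0, P r) :
    ∃ r, 0 < r ∧ r ≤ R ∧ P r ∧ (r = R ∨ 2 * r ≤ R ∧ ¬ P (2 * r)) := by
  classical
  set rad : ℕ → ℝ := fun j => R * 2⁻¹ ^ j
  have hrad : ∀ j, 0 < rad j := fun j => by positivity
  have hle : ∀ j, rad j ≤ R := fun j =>
    mul_le_of_le_one_right hR.le (pow_le_one₀ (by norm_num) (by norm_num))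
  have hrad_tendsto : Tendsto rad atTop (𝓝[>] 0) :=
    tendsto_nhdsWithin_of_tendsto_nhds_of_eventually_within _
      (by simpa only [mul_zero] using (tendsto_pow_atTop_nhds_zero_of_lt_one
        (by norm_num : (0 : ℝ) ≤ 2⁻¹) (by norm_num)).const_mul R)
      (Eventually.of_forall hrad)
  have hex := (hrad_tendsto.eventually hP).exists
  refine ⟨rad (Nat.find hex), hrad _, hle _, Nat.find_spec hex, ?_⟩
  rcases hj : Nat.find hex with _ | i
  · simp [rad]
  · have hparent : 2 * rad (i + 1) = rad i := by simp only [rad, pow_succ]; ring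
    exact Or.inr ⟨hparent ▸ hle i, hparent ▸ Nat.find_min hex (by omega)⟩

section JohnNirenberg

variable {X : Type*} [MetricSpace X] [MeasurableSpace X] {μ : Measure X} {D : ℝ}
  {w : X → ℝ} {Ω : Set X} {M : ℝ}

def OscBoundedOn (μ : Measure X) (w : X → ℝ) (Ω : Set X) (M : ℝ) : Prop :=
  ∀ (x : X) (r : ℝ), 0 < r → ball x r ⊆ Ω → oscBall μ w x r ≤ M

def deviationSet (μ : Measure X) (w : X → ℝ) (x : X) (r t : ℝ) : Set X :=
  {y ∈ ball x r | t < |w y - ⨍ z in ball x r, w z ∂μ|}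

theorem inter_ball_subset_deviationSet {x y : X} {ρ s t δ : ℝ}
    (h : |(⨍ z in ball y s, w z ∂μ) - ⨍ z in ball x ρ, w z ∂μ| ≤ δ) :
    deviationSet μ w x ρ (t + δ) ∩ ball y s ⊆ deviationSet μ w y s t := by
  rintro z ⟨⟨-, hz⟩, hzy⟩
  exact ⟨hzy, by linarith [abs_sub_le (w z) (⨍ z in ball y s, w z ∂μ) (⨍ z in ball x ρ, w z ∂μ)]⟩

theorem oscBall_congr [OpensMeasurableSpace X] {u v : X → ℝ} {x : X} {r : ℝ}
    (h : EqOn u v (ball x r)) : oscBall μ u x r = oscBall μ v x r := by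
  have havg : ⨍ z in ball x r, u z ∂μ = ⨍ z in ball x r, v z ∂μ :=
    setAverage_congr_fun measurableSet_ball (Eventually.of_forall h)
  exact setAverage_congr_fun measurableSet_ball (Eventually.of_forall fun y hy => by
    rw [h hy, havg])

theorem deviationSet_congr [OpensMeasurableSpace X] {u v : X → ℝ} {x : X} {r : ℝ}
    (h : EqOn u v (ball x r)) (t : ℝ) : deviationSet μ u x r t = deviationSet μ v x r t := by
  have havg : ⨍ z in ball x r, u z ∂μ = ⨍ z in ball x r, v z ∂μ :=
    setAverage_congr_fun measurableSet_ball (Eventually.of_forall h)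
  ext y
  simp only [deviationSet, mem_sep_iff, havg]
  exact and_congr_right fun hy => by rw [h hy]

theorem deviationSet_anti {u : X → ℝ} {x : X} {r s t : ℝ} (hst : s ≤ t) :
    deviationSet μ u x r t ⊆ deviationSet μ u x r s :=
  fun _ hy => ⟨hy.1, hst.trans_lt hy.2⟩

theorem measure_deviationSet_succ_inter_ball_le (hμ : IsDoublingWith μ D) {K : ℝ} {k : ℕ}
    (ih : ∀ (x : X) (ρ : ℝ), 0 < ρ → ball x (4 * ρ) ⊆ Ω →
      μ (deviationSet μ w x ρ (k * K)) ≤ 2⁻¹ ^ k * μ (ball x ρ))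
    {x y : X} {ρ s : ℝ} (hs : 0 < s) (hy : ball y (20 * s) ⊆ Ω)
    (hclose : |(⨍ z in ball y (5 * s), w z ∂μ) - ⨍ z in ball x ρ, w z ∂μ| ≤ K) :
    μ (deviationSet μ w x ρ ((k + 1 : ℕ) * K) ∩ ball y (5 * s)) ≤
      2⁻¹ ^ k * (ENNReal.ofReal (D ^ 3) * μ (ball y s)) :=
  calc _ ≤ μ (deviationSet μ w y (5 * s) (k * K)) := measure_mono <| by
        simpa [add_mul] using inter_ball_subset_deviationSet (t := k * K) hclose
    _ ≤ 2⁻¹ ^ k * μ (ball y (5 * s)) :=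
        ih y _ (by positivity) (by rwa [show 4 * (5 * s) = 20 * s by ring])
    _ ≤ _ := by gcongr; exact hμ.measure_ball_le_pow_mul y hs 3 (by linarith)

namespace OscBoundedOn

theorem abs_setAverage_ball_sub_le (hosc : OscBoundedOn μ w Ω M) (hμ : IsDoublingWith μ D)
    (hw : IntegrableOn w Ω μ) {y₁ y₂ : X} {r₁ r₂ C : ℝ} (hr₁ : 0 < r₁) (hr₂ : 0 < r₂)
    (hsub : ball y₁ r₁ ⊆ ball y₂ r₂) (hΩ : ball y₂ r₂ ⊆ Ω)
    (hC : μ.real (ball y₂ r₂) ≤ C * μ.real (ball y₁ r₁)) :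
    |(⨍ z in ball y₁ r₁, w z ∂μ) - ⨍ z in ball y₂ r₂, w z ∂μ| ≤ C * M := by
  have hC₀ : 0 ≤ C := (pos_of_mul_pos_left ((hμ.measureReal_ball_pos y₂ hr₂).trans_le hC)
    measureReal_nonneg).le
  exact (abs_setAverage_sub_setAverage_le hsub (hμ.measure_ball_ne_zero y₁ r₁ hr₁)
    (hμ.measure_ball_ne_top y₂ r₂ hr₂) hC (hw.mono_set hΩ)).trans
    (mul_le_mul_of_nonneg_left (hosc y₂ r₂ hr₂ hΩ) hC₀)

theorem exists_dyadic_stopping_radius (hosc : OscBoundedOn μ w Ω M) (hμ : IsDoublingWith μ D)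
    (hw : IntegrableOn w Ω μ) (hM : 0 ≤ M) {a : ℝ} (ha : D ^ 2 ≤ a) {x y : X} {ρ : ℝ}
    (hρ : 0 < ρ) (hx : ball x (4 * ρ) ⊆ Ω) (hy : y ∈ ball x ρ)
    (hsmall : ∀ᶠ r in 𝓝[>] 0, a * M < ⨍ z in ball y r, |w z - ⨍ z in ball x ρ, w z ∂μ| ∂μ) :
    ∃ r, 0 < r ∧ r ≤ ρ / 10 ∧ a * M < ⨍ z in ball y r, |w z - ⨍ z in ball x ρ, w z ∂μ| ∂μ ∧
      |(⨍ z in ball y (5 * r), w z ∂μ) - ⨍ z in ball x ρ, w z ∂μ| ≤ (a + D ^ 2) * M := by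
  set c := ⨍ z in ball x ρ, w z ∂μ
  have hyx : dist y x < ρ := hy
  have hΩ : ∀ s ≤ 3 * ρ, ball y s ⊆ Ω := fun s hs =>
    (ball_subset_ball' (by linarith)).trans hx
  obtain ⟨r, hr, hrρ, hr_big, hr_top | ⟨hr_parent, hr_stop⟩⟩ :=
    exists_dyadic_radius_of_eventually (by positivity : 0 < ρ / 10) hsmall
  · -- compare with `ball y (2 * ρ)`, which contains `ball x ρ`
    have h₁ := hosc.abs_setAverage_ball_sub_le hμ hw (r₁ := ρ / 2) (r₂ := 2 * ρ) (by positivity)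
      (by positivity) (ball_subset_ball (by linarith)) (hΩ _ (by linarith))
      (hμ.measureReal_ball_le_pow_mul y (by positivity) 2 (by linarith))
    have h₂ := hosc.abs_setAverage_ball_sub_le hμ hw (y₁ := x) (y₂ := y) (r₂ := 2 * ρ) hρ
      (by positivity) (ball_subset_ball' (by rw [dist_comm]; linarith)) (hΩ _ (by linarith))
      ((measureReal_mono (show ball y (2 * ρ) ⊆ ball x (4 * ρ) from
        ball_subset_ball' (by linarith)) (hμ.measure_ball_ne_top x _ (by positivity))).trans
        (hμ.measureReal_ball_le_pow_mul x hρ 2 (by norm_num)))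
    refine ⟨r, hr, hrρ, hr_big, ?_⟩
    rw [hr_top, show 5 * (ρ / 10) = ρ / 2 by ring]
    calc _ ≤ _ := abs_sub_le _ (⨍ z in ball y (2 * ρ), w z ∂μ) c
      _ ≤ D ^ 2 * M + D ^ 2 * M := add_le_add h₁ (abs_sub_comm c _ ▸ h₂)
      _ ≤ (a + D ^ 2) * M := by nlinarith
  · -- compare with the parent ball `ball y (2 * r)`, on which the stopping rule failed
    have h₁ := hosc.abs_setAverage_ball_sub_le hμ hw (r₁ := 2 * r) (r₂ := 5 * r) (by positivity)
      (by positivity) (ball_subset_ball (by linarith)) (hΩ _ (by linarith))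
      (hμ.measureReal_ball_le_pow_mul y (by positivity) 2 (by linarith))
    have h₂ := (abs_setAverage_sub_le (hμ.measure_ball_ne_zero y _ (by positivity))
      (hμ.measure_ball_ne_top y _ (by positivity))
      (hw.mono_set (hΩ (2 * r) (by linarith))) c).trans (not_lt.1 hr_stop)
    refine ⟨r, hr, hrρ, hr_big, ?_⟩
    calc _ ≤ _ := abs_sub_le _ (⨍ z in ball y (2 * r), w z ∂μ) c
      _ ≤ D ^ 2 * M + a * M := add_le_add (abs_sub_comm (⨍ z in ball y (2 * r), w z ∂μ) _ ▸ h₁) h₂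
      _ = (a + D ^ 2) * M := by ring

theorem exists_stopping_radius [BorelSpace X] (hosc : OscBoundedOn μ w Ω M)
    (hμ : IsDoublingWith μ D) (hw : Integrable w μ) (hM : 0 < M) {x y : X} {ρ : ℝ}
    (hρ : 0 < ρ) (hx : ball x (4 * ρ) ⊆ Ω) (hyx : y ∈ ball x ρ)
    (hy : Tendsto (fun r => ⨍ z in closedBall y r, |w z - w y| ∂μ) (𝓝[>] 0) (𝓝 0))
    (hyc : 5 * D ^ 6 * M < |w y - ⨍ z in ball x ρ, w z ∂μ|) :
    ∃ r, 0 < r ∧ r ≤ ρ / 10 ∧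
      4 * D ^ 5 * M < ⨍ z in ball y r, |w z - ⨍ z in ball x ρ, w z ∂μ| ∂μ ∧
      |(⨍ z in ball y (5 * r), w z ∂μ) - ⨍ z in ball x ρ, w z ∂μ| ≤ 5 * D ^ 6 * M := by
  have hD := hμ.one_le
  have hsmall := hμ.eventually_lt_setAverage_ball hw hy (t := 4 * D ^ 5 * M) <| by
    have : 0 < D ^ 6 * M := by positivity
    linarith [show D * D ^ 5 = D ^ 6 by ring]
  obtain ⟨r, hr₀, hrρ, hr_big, hr_close⟩ := hosc.exists_dyadic_stopping_radius hμ hw.integrableOn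
    hM.le (a := 4 * D ^ 5) (by nlinarith [pow_le_pow_right₀ hD (by norm_num : 2 ≤ 5)])
    hρ hx hyx hsmall
  exact ⟨r, hr₀, hrρ, hr_big, hr_close.trans (by
    nlinarith [pow_le_pow_right₀ hD (by norm_num : 2 ≤ 6), pow_le_pow_right₀ hD
      (by norm_num : 5 ≤ 6)])⟩

theorem setIntegral_ball_two_mul_abs_sub_le (hosc : OscBoundedOn μ w Ω M)
    (hμ : IsDoublingWith μ D) (hw : IntegrableOn w Ω μ) (hM : 0 ≤ M) {x : X} {ρ : ℝ}
    (hρ : 0 < ρ) (hΩ : ball x (2 * ρ) ⊆ Ω) :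
    ∫ z in ball x (2 * ρ), |w z - ⨍ z in ball x ρ, w z ∂μ| ∂μ ≤
      2 * D ^ 2 * M * μ.real (ball x ρ) := by
  have hD := hμ.one_le
  have hdouble : μ.real (ball x (2 * ρ)) ≤ D * μ.real (ball x ρ) := by
    simpa using hμ.measureReal_ball_le_pow_mul x hρ 1 (by linarith)
  have hc := hosc.abs_setAverage_ball_sub_le hμ hw hρ (by positivity)
    (ball_subset_ball (by linarith)) hΩ hdouble
  calc _ ≤ μ.real (ball x (2 * ρ)) * (oscBall μ w x (2 * ρ) + |_ - ⨍ z in ball x ρ, w z ∂μ|) :=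
        setIntegral_abs_sub_le (hμ.measure_ball_ne_top x _ (by positivity)) (hw.mono_set hΩ) _ _
    _ ≤ (D * μ.real (ball x ρ)) * (M + D * M) := by
      refine mul_le_mul hdouble (add_le_add (hosc x _ (by positivity) hΩ) ?_) ?_
        (by positivity)
      · rwa [abs_sub_comm]
      · exact add_nonneg (by simp only [oscBall, setAverage_eq, smul_eq_mul]; positivity)
          (abs_nonneg _)
    _ ≤ 2 * D ^ 2 * M * μ.real (ball x ρ) := by
      have := measureReal_nonneg (μ := μ) (s := ball x ρ)
      nlinarith [mul_nonneg (mul_nonneg this hM) (sub_nonneg.2 hD)]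

theorem ofReal_pow_mul_measure_biUnion_le [OpensMeasurableSpace X] (hosc : OscBoundedOn μ w Ω M)
    (hμ : IsDoublingWith μ D) (hw : IntegrableOn w Ω μ) (hM : 0 < M) {x : X} {ρ : ℝ}
    (hρ : 0 < ρ) (hx : ball x (4 * ρ) ⊆ Ω) {u : Set X} (hu : u.Countable) {r : X → ℝ}
    (hdisj : u.PairwiseDisjoint fun i => ball i (r i)) (hr : ∀ i ∈ u, 0 < r i)
    (hsub : ∀ i ∈ u, ball i (r i) ⊆ ball x (2 * ρ))
    (hbig : ∀ i ∈ u, 4 * D ^ 5 * M < ⨍ z in ball i (r i), |w z - ⨍ z in ball x ρ, w z ∂μ| ∂μ) :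
    ENNReal.ofReal (D ^ 3) * μ (⋃ i ∈ u, ball i (r i)) ≤ 2⁻¹ * μ (ball x ρ) := by
  set c := ⨍ z in ball x ρ, w z ∂μ
  have hΩ : ball x (2 * ρ) ⊆ Ω := (ball_subset_ball (by linarith)).trans hx
  have hfin := hμ.measure_ball_ne_top x (2 * ρ) (by positivity)
  have hint := hosc.setIntegral_ball_two_mul_abs_sub_le hμ hw hM.le hρ hΩ
  have hcheb : ENNReal.ofReal (4 * D ^ 5 * M) * μ (⋃ i ∈ u, ball i (r i)) ≤
      ENNReal.ofReal (2 * D ^ 2 * M) * μ (ball x ρ) :=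
    calc _ ≤ ∫⁻ z in ⋃ i ∈ u, ball i (r i), ENNReal.ofReal |w z - c| ∂μ :=
          mul_measure_biUnion_le_setLIntegral hu (fun _ _ => measurableSet_ball) hdisj
            fun i hi => ofReal_mul_measure_le_setLIntegral
              (hμ.measure_ball_ne_zero i _ (hr i hi))
              (ne_top_of_le_ne_top hfin (measure_mono (hsub i hi)))
              ((hw.mono_set ((hsub i hi).trans hΩ)).sub (integrableOn_const
                (ne_top_of_le_ne_top hfin (measure_mono (hsub i hi))))).abs
              (fun _ => abs_nonneg _) (hbig i hi).le
      _ ≤ ∫⁻ z in ball x (2 * ρ), ENNReal.ofReal |w z - c| ∂μ :=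
          lintegral_mono_set (iUnion₂_subset hsub)
      _ = ENNReal.ofReal (∫ z in ball x (2 * ρ), |w z - c| ∂μ) :=
          (ofReal_integral_eq_lintegral_ofReal
            ((hw.mono_set hΩ).sub (integrableOn_const hfin)).abs
            (Eventually.of_forall fun _ => abs_nonneg _)).symm
      _ ≤ _ := by
        rw [← ENNReal.ofReal_toReal (hμ.measure_ball_ne_top x ρ hρ), ← ENNReal.ofReal_mul
          (by positivity)]
        exact ENNReal.ofReal_le_ofReal hint
  have hsplit : ENNReal.ofReal (4 * D ^ 5 * M) =
      ENNReal.ofReal (2 * D ^ 2 * M) * (2 * ENNReal.ofReal (D ^ 3)) := by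
    rw [← ENNReal.ofReal_ofNat 2, ← ENNReal.ofReal_mul (by norm_num),
      ← ENNReal.ofReal_mul (by positivity)]
    ring_nf
  rw [hsplit, mul_assoc, mul_assoc] at hcheb
  rw [← ENNReal.mul_le_iff_le_inv two_ne_zero ENNReal.ofNat_ne_top, ← mul_assoc]
  have hD := hμ.one_le
  exact (ENNReal.mul_le_mul_iff_right (by simp; positivity) ENNReal.ofReal_ne_top).1 hcheb

theorem measure_deviationSet_succ_le [BorelSpace X] (hosc : OscBoundedOn μ w Ω M)
    (hμ : IsDoublingWith μ D) (hw : Integrable w μ) (hM : 0 < M) {k : ℕ}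
    (ih : ∀ (x : X) (ρ : ℝ), 0 < ρ → ball x (4 * ρ) ⊆ Ω →
      μ (deviationSet μ w x ρ (k * (5 * D ^ 6 * M))) ≤ 2⁻¹ ^ k * μ (ball x ρ))
    {x : X} {ρ : ℝ} (hρ : 0 < ρ) (hx : ball x (4 * ρ) ⊆ Ω) :
    μ (deviationSet μ w x ρ ((k + 1 : ℕ) * (5 * D ^ 6 * M))) ≤
      2⁻¹ ^ (k + 1) * μ (ball x ρ) := by
  set c := ⨍ z in ball x ρ, w z ∂μ
  set E := deviationSet μ w x ρ ((k + 1 : ℕ) * (5 * D ^ 6 * M))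
  set L := {y | Tendsto (fun r => ⨍ z in closedBall y r, |w z - w y| ∂μ) (𝓝[>] 0) (𝓝 0)}
  have hL : μ Lᶜ = 0 := hμ.ae_tendsto_setAverage_abs_sub hw.locallyIntegrable
  have hsel : ∀ y ∈ E ∩ L, ∃ r, 0 < r ∧ r ≤ ρ / 10 ∧
      4 * D ^ 5 * M < ⨍ z in ball y r, |w z - c| ∂μ ∧
      |(⨍ z in ball y (5 * r), w z ∂μ) - c| ≤ 5 * D ^ 6 * M := fun y ⟨⟨hyx, hyE⟩, hyL⟩ =>
    hosc.exists_stopping_radius hμ hw hM hρ hx hyx hyL <| lt_of_le_of_lt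
      (le_mul_of_one_le_left (by positivity) (by exact_mod_cast Nat.le_add_left 1 k)) hyE
  choose! r hr using hsel
  have := hμ.secondCountableTopology
  obtain ⟨u, hu_sub, hu_count, hu_disj, hu_cover⟩ :=
    exists_countable_disjoint_ball_cover (E ∩ L) r (fun y hy => (hr y hy).1)
      (fun y hy => (hr y hy).2.1)
  have hcenter : ∀ i ∈ u, dist i x < ρ := fun i hi => (hu_sub hi).1.1
  have hpack := hosc.ofReal_pow_mul_measure_biUnion_le hμ hw.integrableOn hM hρ hx hu_count hu_disj
    (fun i hi => (hr i (hu_sub hi)).1)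
    (fun i hi => ball_subset_ball' (by linarith [(hr i (hu_sub hi)).2.1, hcenter i hi]))
    (fun i hi => (hr i (hu_sub hi)).2.2.1)
  have hpiece : ∀ i ∈ u, μ (E ∩ ball i (5 * r i)) ≤
      2⁻¹ ^ k * (ENNReal.ofReal (D ^ 3) * μ (ball i (r i))) := fun i hi =>
    measure_deviationSet_succ_inter_ball_le hμ ih (hr i (hu_sub hi)).1
      ((ball_subset_ball' (by linarith [(hr i (hu_sub hi)).2.1, hcenter i hi])).trans hx)
      (hr i (hu_sub hi)).2.2.2
  calc μ E = μ (E ∩ L) := (measure_inter_conull hL).symm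
    _ ≤ μ (⋃ i ∈ u, E ∩ ball i (5 * r i)) := measure_mono fun y hy => by
        obtain ⟨i, hi, hyi⟩ := mem_iUnion₂.1 (hu_cover hy)
        exact mem_biUnion hi ⟨hy.1, hyi⟩
    _ ≤ ∑' i : u, 2⁻¹ ^ k * (ENNReal.ofReal (D ^ 3) * μ (ball i (r i))) :=
        (measure_biUnion_le μ hu_count _).trans (ENNReal.tsum_le_tsum fun i => hpiece i i.2)
    _ = 2⁻¹ ^ k * (ENNReal.ofReal (D ^ 3) * μ (⋃ i ∈ u, ball i (r i))) := by
        rw [measure_biUnion hu_count hu_disj (fun _ _ => measurableSet_ball),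
          ENNReal.tsum_mul_left, ENNReal.tsum_mul_left]
    _ ≤ 2⁻¹ ^ k * (2⁻¹ * μ (ball x ρ)) := by gcongr
    _ = 2⁻¹ ^ (k + 1) * μ (ball x ρ) := by rw [pow_succ, mul_assoc]

theorem measure_deviationSet_le [BorelSpace X] (hosc : OscBoundedOn μ w Ω M)
    (hμ : IsDoublingWith μ D) (hw : Integrable w μ) (hM : 0 < M) (k : ℕ) {x : X} {ρ : ℝ}
    (hρ : 0 < ρ) (hx : ball x (4 * ρ) ⊆ Ω) :
    μ (deviationSet μ w x ρ (k * (5 * D ^ 6 * M))) ≤ 2⁻¹ ^ k * μ (ball x ρ) := by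
  induction k generalizing x ρ with
  | zero => simpa using measure_mono (show deviationSet μ w x ρ _ ⊆ ball x ρ from sep_subset _ _)
  | succ k ih => exact hosc.measure_deviationSet_succ_le hμ hw hM (fun _ _ => ih) hρ hx

end OscBoundedOn

end JohnNirenberg

theorem inv_two_pow_floor_le_ofReal_two_mul_exp (K M t : ℝ) :
    (2⁻¹ : ℝ≥0∞) ^ ⌊t / (K * M)⌋₊ ≤ ENNReal.ofReal (2 * Real.exp (-(Real.log 2 / K * t) / M)) := by
  set x := t / (K * M)
  have hlog := Real.log_pos one_lt_two
  rw [← ENNReal.ofReal_ofNat 2, ← ENNReal.ofReal_inv_of_pos two_pos,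
    ← ENNReal.ofReal_pow (by norm_num)]
  refine ENNReal.ofReal_le_ofReal ?_
  calc (2⁻¹ : ℝ) ^ ⌊x⌋₊ = Real.exp (-(⌊x⌋₊ * Real.log 2)) := by
        rw [Real.exp_neg, Real.exp_nat_mul, Real.exp_log two_pos, inv_pow]
    _ ≤ Real.exp (Real.log 2 + -(Real.log 2 * x)) :=
        Real.exp_le_exp.2 (by nlinarith [Nat.lt_floor_add_one x])
    _ = 2 * Real.exp (-(Real.log 2 / K * t) / M) := by
        rw [Real.exp_add, Real.exp_log two_pos]
        simp only [x]
        ring_nf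

/-- John–Nirenberg lemma in doubling metric measure spaces:
If the mean oscillation of `u` over every ball contained in `5B` is at most `M`, then for
every `λ > 0`,
`μ {x ∈ B : |u(x) − u_B| > λ} ≤ 2 μ(B) exp(−Aλ/M)`, where `A > 0` depends only on the
doubling constant of `μ`. -/
theorem john_nirenberg_doubling {X : Type*} [MetricSpace X] [MeasurableSpace X]
    [BorelSpace X] (μ : Measure X) (D : ℝ) (hD : 1 ≤ D)
    (hdoubling : ∀ (x : X) (r : ℝ), 0 < r →
      μ (ball x (2 * r)) ≤ ENNReal.ofReal D * μ (ball x r))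
    (hpos : ∀ (x : X) (r : ℝ), 0 < r → μ (ball x r) ≠ 0)
    (hfin : ∀ (x : X) (r : ℝ), 0 < r → μ (ball x r) ≠ ⊤) :
    ∃ A : ℝ, 0 < A ∧
      ∀ (u : X → ℝ) (x₀ : X) (r₀ M : ℝ), 0 < r₀ → 0 < M →
        IntegrableOn u (ball x₀ (5 * r₀)) μ →
        (∀ (x : X) (r : ℝ), 0 < r → ball x r ⊆ ball x₀ (5 * r₀) →
          oscBall μ u x r ≤ M) →
        ∀ lam : ℝ, 0 < lam →
          μ {y ∈ ball x₀ r₀ | lam < |u y - ⨍ z in ball x₀ r₀, u z ∂μ|} ≤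
            ENNReal.ofReal (2 * Real.exp (-(A * lam) / M)) * μ (ball x₀ r₀) := by
  have hμ : IsDoublingWith μ D := ⟨hD, hdoubling, hpos, hfin⟩
  refine ⟨Real.log 2 / (5 * D ^ 6), by have := Real.log_pos one_lt_two; positivity, ?_⟩
  intro u x₀ r₀ M hr₀ hM hu hosc lam _
  -- `w` agrees with `u` on `5B` and is integrable on all of `X`, as Lebesgue's differentiation
  -- theorem requires
  set w := (ball x₀ (5 * r₀)).indicator u
  have hwu : ∀ {x r}, ball x r ⊆ ball x₀ (5 * r₀) → EqOn w u (ball x r) :=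
    fun hsub _ hy => indicator_of_mem (hsub hy) u
  have hosc_w : OscBoundedOn μ w (ball x₀ (5 * r₀)) M := fun x r hr hsub =>
    (oscBall_congr (hwu hsub)).trans_le (hosc x r hr hsub)
  set k := ⌊lam / (5 * D ^ 6 * M)⌋₊
  have hk : k * (5 * D ^ 6 * M) ≤ lam :=
    (le_div_iff₀ (by positivity)).1 (Nat.floor_le (by positivity))
  calc μ {y ∈ ball x₀ r₀ | lam < |u y - ⨍ z in ball x₀ r₀, u z ∂μ|}
      = μ (deviationSet μ w x₀ r₀ lam) := by
        rw [deviationSet_congr (hwu (ball_subset_ball (by linarith)))]; rfl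
    _ ≤ μ (deviationSet μ w x₀ r₀ (k * (5 * D ^ 6 * M))) := measure_mono (deviationSet_anti hk)
    _ ≤ 2⁻¹ ^ k * μ (ball x₀ r₀) :=
        hosc_w.measure_deviationSet_le hμ ((integrable_indicator_iff measurableSet_ball).2 hu) hM
          k hr₀ (ball_subset_ball (by linarith))
    _ ≤ _ := by gcongr; exact inv_two_pow_floor_le_ofReal_two_mul_exp _ _ _
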